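/- arXiv:2605.13383 — 2 statements merged into one kernel-verified Lean document; each statement's English description precedes it below -/
import Mathlib

section
/- Let Delta_f = -sum_{k=1}^K nabla_{f_k}^2, g^(0) a unit vector in C^N, and g^(t) = exp(-i t Delta_f) g^(0). Then for each k, d/dt <X_{f_k} g^(t), g^(t)> = 2 Re(<i nabla_{f_k} g^(t), W_{f_k} g^(t)>) - sum_{j != k} <[i nabla_{f_j}^2, X_{f_k}] g^(t), g^(t)>. -/
open Complex Matrix BigOperators
noncomputable section

/-- Standard Hermitian inner product on `ℂ^N`. -/
def ip {N : ℕ} (f g : Fin N → ℂ) : ℂ := ∑ v, f v * (starRingEnd ℂ) (g v)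

/-- The (complexified) `f`-partial derivative matrix. -/
def nablaF {N : ℕ} (A : Matrix (Fin N) (Fin N) ℝ) (f : Fin N → ℝ) :
    Matrix (Fin N) (Fin N) ℂ :=
  Matrix.of fun n m => (A n m : ℂ) * ((f n : ℂ) - (f m : ℂ))

/-- The location observable `X_f = diag f` on `ℂ^N`. -/
def Xf {N : ℕ} (f : Fin N → ℝ) : Matrix (Fin N) (Fin N) ℂ :=
  Matrix.diagonal fun v => (f v : ℂ)

/-- The `f`-smoothing operator `W_f = X_f ∇_f - ∇_f X_f`. -/
def Wf {N : ℕ} (A : Matrix (Fin N) (Fin N) ℝ) (f : Fin N → ℝ) :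
    Matrix (Fin N) (Fin N) ℂ :=
  Xf f * nablaF A f - nablaF A f * Xf f

/-- The multi-feature Schrödinger Laplacian `Δ_f = -∑ⱼ ∇_{fⱼ}²`. -/
def DeltaMulti {N K : ℕ} (A : Matrix (Fin N) (Fin N) ℝ) (F : Fin K → Fin N → ℝ) :
    Matrix (Fin N) (Fin N) ℂ :=
  -(∑ j, nablaF A (F j) * nablaF A (F j))

/-- The Schrödinger evolution `g^(t) = exp(-i t Δ) g^(0)`. -/
def evol {N : ℕ} (Δ : Matrix (Fin N) (Fin N) ℂ) (g0 : Fin N → ℂ) (t : ℝ) :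
    Fin N → ℂ :=
  (NormedSpace.exp ((-(Complex.I * (t : ℂ))) • Δ)).mulVec g0

/-! ### Auxiliary lemmas -/

lemma ip_add_left {N : ℕ} (u w v : Fin N → ℂ) : ip (u + w) v = ip u v + ip w v := by
  simp [ip, add_mul, Finset.sum_add_distrib]

lemma ip_neg_left {N : ℕ} (u v : Fin N → ℂ) : ip (-u) v = -ip u v := by
  simp [ip, Finset.sum_neg_distrib]

lemma ip_adjoint {N : ℕ} (M : Matrix (Fin N) (Fin N) ℂ) (u v : Fin N → ℂ) :
    ip (M.mulVec u) v = ip u (Mᴴ.mulVec v) := by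
  simp only [ip, Matrix.mulVec, dotProduct, Matrix.conjTranspose_apply,
    Finset.sum_mul, Finset.mul_sum, map_sum]
  rw [Finset.sum_comm]
  refine Finset.sum_congr rfl fun n _ => Finset.sum_congr rfl fun m _ => ?_
  simp only [starRingEnd_apply, star_mul', star_star]
  ring

lemma ip_adjoint' {N : ℕ} (M : Matrix (Fin N) (Fin N) ℂ) (u v : Fin N → ℂ) :
    ip u (M.mulVec v) = ip (Mᴴ.mulVec u) v := by
  rw [ip_adjoint, Matrix.conjTranspose_conjTranspose]

lemma ip_conj_symm {N : ℕ} (u v : Fin N → ℂ) : (starRingEnd ℂ) (ip u v) = ip v u := by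
  simp only [ip, map_sum]
  refine Finset.sum_congr rfl fun n _ => ?_
  simp only [starRingEnd_apply, star_mul', star_star]
  ring

lemma nablaF_conjTranspose {N : ℕ} {A : Matrix (Fin N) (Fin N) ℝ} (hA : A.IsSymm)
    (f : Fin N → ℝ) : (nablaF A f)ᴴ = -nablaF A f := by
  ext n m
  simp only [Matrix.conjTranspose_apply, nablaF, Matrix.of_apply, Matrix.neg_apply]
  rw [show ((A m n : ℂ) * ((f m : ℂ) - (f n : ℂ))) = ((A m n * (f m - f n) : ℝ) : ℂ) by
    push_cast; ring]
  rw [Complex.star_def, Complex.conj_ofReal, hA.apply n m]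
  push_cast
  ring

lemma Xf_conjTranspose {N : ℕ} (f : Fin N → ℝ) : (Xf f)ᴴ = Xf f := by
  rw [Xf, Matrix.diagonal_conjTranspose]
  simp [Pi.star_def, Complex.star_def, Complex.conj_ofReal]

attribute [local instance] Matrix.linftyOpNormedAddCommGroup Matrix.linftyOpNormedRing
  Matrix.linftyOpNormedAlgebra

/-- Expected multi-feature derivative under multi-feature Schrödinger dynamics:
`d/dt ⟨X_{f_k} g^(t), g^(t)⟩ = 2 Re ⟨i ∇_{f_k} g^(t), W_{f_k} g^(t)⟩
  - ∑_{j ≠ k} ⟨[i ∇_{f_j}², X_{f_k}] g^(t), g^(t)⟩`. -/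
theorem deriv_expected_multi_feature (N K : ℕ) (A : Matrix (Fin N) (Fin N) ℝ)
    (hA : A.IsSymm) (F : Fin K → Fin N → ℝ) (k : Fin K)
    (g0 : Fin N → ℂ) (hg0 : ip g0 g0 = 1) (t : ℝ) :
    HasDerivAt
      (fun s : ℝ =>
        ip ((Xf (F k)).mulVec (evol (DeltaMulti A F) g0 s))
          (evol (DeltaMulti A F) g0 s))
      ((((2 * (ip ((Complex.I • nablaF A (F k)).mulVec (evol (DeltaMulti A F) g0 t))
            ((Wf A (F k)).mulVec (evol (DeltaMulti A F) g0 t))).re : ℝ) : ℂ))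
        - ∑ j ∈ Finset.univ.erase k,
            ip (((Complex.I • (nablaF A (F j) * nablaF A (F j))) * Xf (F k)
                  - Xf (F k) * (Complex.I • (nablaF A (F j) * nablaF A (F j)))).mulVec
                (evol (DeltaMulti A F) g0 t))
              (evol (DeltaMulti A F) g0 t))
      t := by
  classical
  set Δm := DeltaMulti A F with hΔdef
  set X := Xf (F k) with hXdef
  set B : Matrix (Fin N) (Fin N) ℂ := (-Complex.I) • Δm with hBdef
  set g : ℝ → Fin N → ℂ := evol Δm g0 with hgdef
  set g' : Fin N → ℂ := B.mulVec (g t) with hg'def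
  -- Step 1: derivative of the matrix exponential
  have hE : HasDerivAt (fun s : ℝ => NormedSpace.exp ((-(Complex.I * (s : ℂ))) • Δm))
      (B * NormedSpace.exp ((-(Complex.I * (t : ℂ))) • Δm)) t := by
    have key : ∀ u : ℂ, u • B = (-(Complex.I * u)) • Δm := by
      intro u; rw [hBdef, smul_smul]; congr 1; ring
    have h1 : HasDerivAt (fun u : ℂ => NormedSpace.exp (u • B))
        (B * NormedSpace.exp ((t : ℂ) • B)) (t : ℂ) :=
      hasDerivAt_exp_smul_const' _ _
    have h2 := h1.scomp t Complex.ofRealCLM.hasDerivAt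
    simp only [key] at h2
    simp only [Complex.ofRealCLM_apply, Complex.ofReal_one, one_smul] at h2
    exact h2
  -- Step 2: derivative of the evolution, coordinatewise
  have hg : HasDerivAt g g' t := by
    let L : Matrix (Fin N) (Fin N) ℂ →ₗ[ℂ] (Fin N → ℂ) :=
      { toFun := fun M => M.mulVec g0
        map_add' := fun M M' => Matrix.add_mulVec M M' g0
        map_smul' := fun c M => Matrix.smul_mulVec c M g0 }
    have hL := ((LinearMap.toContinuousLinearMap L).restrictScalars ℝ).hasFDerivAt.comp_hasDerivAt
      (x := t) hE
    simp only [Function.comp_def, ContinuousLinearMap.coe_restrictScalars',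
      LinearMap.coe_toContinuousLinearMap', LinearMap.coe_mk, AddHom.coe_mk, L] at hL
    have hfn : (fun s : ℝ => (NormedSpace.exp ((-(Complex.I * (s : ℂ))) • Δm)).mulVec g0) = g := by
      funext s; rfl
    have hdv : (B * NormedSpace.exp ((-(Complex.I * (t : ℂ))) • Δm)).mulVec g0 = g' := by
      rw [hg'def, ← Matrix.mulVec_mulVec]
      rfl
    rw [← hdv]
    exact hL
  have hcoord : ∀ v, HasDerivAt (fun s => g s v) (g' v) t := fun v => hasDerivAt_pi.mp hg v
  -- Step 3: derivative of the quadratic form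
  have hfun : (fun s : ℝ => ip (X.mulVec (g s)) (g s)) =
      fun s => ∑ v, (∑ w, X v w * g s w) * star (g s v) := rfl
  have hD : HasDerivAt (fun s : ℝ => ip (X.mulVec (g s)) (g s))
      (∑ v, ((∑ w, X v w * g' w) * star (g t v) + (∑ w, X v w * g t w) * star (g' v))) t := by
    rw [hfun]
    exact HasDerivAt.fun_sum fun v _ =>
      ((HasDerivAt.fun_sum fun w _ => (hcoord w).const_mul (X v w)).mul (hcoord v).star)
  -- identify the derivative value with inner products
  have hval : (∑ v, ((∑ w, X v w * g' w) * star (g t v) + (∑ w, X v w * g t w) * star (g' v)))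
      = ip (X.mulVec g') (g t) + ip (X.mulVec (g t)) g' := by
    rw [Finset.sum_add_distrib]
    rfl
  rw [hval] at hD
  -- Step 4: algebraic identification of the derivative value
  convert hD using 1
  clear hD hfun hcoord hg hE
  -- abbreviations
  set gt := g t with hgt
  -- P as an additive monoid hom
  set P : Matrix (Fin N) (Fin N) ℂ → ℂ := fun M => ip (M.mulVec gt) gt with hPdef
  have Padd : ∀ M M', P (M + M') = P M + P M' := by
    intro M M'; simp only [hPdef, Matrix.add_mulVec, ip_add_left]
  have Pneg : ∀ M, P (-M) = -P M := by
    intro M; simp only [hPdef, Matrix.neg_mulVec, ip_neg_left]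
  have Psub : ∀ M M', P (M - M') = P M - P M' := by
    intro M M'; rw [sub_eq_add_neg, Padd, Pneg, sub_eq_add_neg]
  -- conjugate transposes
  have hXct : Xᴴ = X := Xf_conjTranspose (F k)
  have hNct : ∀ j, (nablaF A (F j))ᴴ = -nablaF A (F j) := fun j => nablaF_conjTranspose hA (F j)
  have hSct : ∀ j, (nablaF A (F j) * nablaF A (F j))ᴴ = nablaF A (F j) * nablaF A (F j) := by
    intro j; rw [Matrix.conjTranspose_mul, hNct j]; simp
  have hΔct : Δmᴴ = Δm := by
    rw [hΔdef]
    simp only [DeltaMulti, Matrix.conjTranspose_neg, Matrix.conjTranspose_sum]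
    congr 1
    exact Finset.sum_congr rfl fun j _ => hSct j
  have hWct : (Wf A (F k))ᴴ = Wf A (F k) := by
    simp only [Wf, Matrix.conjTranspose_sub, Matrix.conjTranspose_mul, hXct, hNct k, ← hXdef]
    simp only [Matrix.neg_mul, Matrix.mul_neg, neg_neg, sub_neg_eq_add]
    abel
  -- LHS (goal's stated value): rewrite both terms of hD's value into P form
  have h1 : ip (X.mulVec g') gt = P (X * B) := by
    rw [hg'def, Matrix.mulVec_mulVec, hPdef]
  have h2 : ip (X.mulVec gt) g' = P ((Complex.I • Δm) * X) := by
    rw [hg'def, ip_adjoint' B, hBdef]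
    have : ((-Complex.I) • Δm)ᴴ = Complex.I • Δm := by
      rw [Matrix.conjTranspose_smul, hΔct]; simp
    rw [this, Matrix.mulVec_mulVec, hPdef]
  -- The key single-feature identity
  have z_eq : ((2 * (ip ((Complex.I • nablaF A (F k)).mulVec gt)
        ((Wf A (F k)).mulVec gt)).re : ℝ) : ℂ)
      = - P ((Complex.I • (nablaF A (F k) * nablaF A (F k))) * X
            - X * (Complex.I • (nablaF A (F k) * nablaF A (F k)))) := by
    set z := ip ((Complex.I • nablaF A (F k)).mulVec gt) ((Wf A (F k)).mulVec gt) with hz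
    have hconj : ((2 * z.re : ℝ) : ℂ) = z + (starRingEnd ℂ) z := (Complex.add_conj z).symm
    have hNsm : (Complex.I • nablaF A (F k))ᴴ = Complex.I • nablaF A (F k) := by
      rw [Matrix.conjTranspose_smul, hNct k]; simp
    have hz1 : z = P (Wf A (F k) * (Complex.I • nablaF A (F k))) := by
      rw [hz, ip_adjoint' (Wf A (F k)), hWct, Matrix.mulVec_mulVec, hPdef]
    have hz2 : (starRingEnd ℂ) z = P ((Complex.I • nablaF A (F k)) * Wf A (F k)) := by
      rw [hz, ip_conj_symm, ip_adjoint' (Complex.I • nablaF A (F k)), hNsm,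
        Matrix.mulVec_mulVec, hPdef]
    rw [hconj, hz2, hz1, ← Padd, ← Pneg]
    congr 1
    rw [Wf, ← hXdef]
    simp only [Matrix.mul_smul, Matrix.smul_mul, ← smul_add]
    rw [neg_sub, ← smul_sub]
    congr 1
    noncomm_ring
  -- now assemble
  have hsum : P (X * B) + P ((Complex.I • Δm) * X)
      = - ∑ j, P ((Complex.I • (nablaF A (F j) * nablaF A (F j))) * X
            - X * (Complex.I • (nablaF A (F j) * nablaF A (F j)))) := by
    rw [← Padd]
    have hmat : X * B + (Complex.I • Δm) * X
        = - ∑ j, ((Complex.I • (nablaF A (F j) * nablaF A (F j))) * X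
            - X * (Complex.I • (nablaF A (F j) * nablaF A (F j)))) := by
      set S : Fin K → Matrix (Fin N) (Fin N) ℂ := fun j => nablaF A (F j) * nablaF A (F j)
        with hSdef
      have hΔS : Δm = -(∑ j, S j) := by rw [hΔdef]; rfl
      have e1 : X * B = Complex.I • (X * ∑ j, S j) := by
        rw [hBdef, hΔS, smul_neg, neg_smul, neg_neg, Matrix.mul_smul]
      have e2 : (Complex.I • Δm) * X = -(Complex.I • ((∑ j, S j) * X)) := by
        rw [hΔS, smul_neg, Matrix.neg_mul, Matrix.smul_mul]
      have e3 : ∀ j, -(Complex.I • S j * X - X * Complex.I • S j)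
          = Complex.I • (X * S j + -(S j * X)) := by
        intro j
        simp only [Matrix.smul_mul, Matrix.mul_smul, ← smul_sub, ← smul_neg]
        congr 1
        abel
      rw [e1, e2, ← Finset.sum_neg_distrib]
      simp_rw [hSdef] at e3
      simp_rw [e3]
      rw [← Finset.smul_sum, Finset.sum_add_distrib, ← Finset.mul_sum,
        Finset.sum_neg_distrib, ← Finset.sum_mul, smul_add, smul_neg]
    rw [hmat]
    -- P of a finite sum
    have Psum : ∀ (s : Finset (Fin K)) (f : Fin K → Matrix (Fin N) (Fin N) ℂ),
        P (∑ j ∈ s, f j) = ∑ j ∈ s, P (f j) := by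
      intro s f
      induction s using Finset.induction_on with
      | empty => simp [hPdef, ip, Matrix.mulVec, dotProduct]
      | insert _ _ h ih => rw [Finset.sum_insert h, Finset.sum_insert h, Padd, ih]
    rw [Pneg, Psum]
  rw [h1, h2, hsum, ← Finset.add_sum_erase _ _ (Finset.mem_univ k), neg_add, z_eq]
  simp only [hPdef]
  ring
end
end

section
/- Let g^(t) = exp(-i t Delta_f) g^(0) with ||g^(0)|| = 1, and suppose there exists e_t with W_f g^(t) = g^(t) + e_t and ||e_t|| <= epsilon (epsilon-f regularity). Then |d/dt <X_f g^(t), g^(t)> - 2 <i nabla_f g^(0), g^(0)>| <= 2 epsilon ||nabla_f||_op. -/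
open Complex Matrix BigOperators
noncomputable section

/-- The ℓ² (Euclidean) norm of a vector in `ℂ^N`. -/
def l2norm {N : ℕ} (v : Fin N → ℂ) : ℝ :=
  ‖(WithLp.equiv 2 (Fin N → ℂ)).symm v‖

/-- The ℓ² operator norm of a matrix on `ℂ^N`. -/
def opNorm {N : ℕ} (M : Matrix (Fin N) (Fin N) ℂ) : ℝ :=
  ‖Matrix.toEuclideanCLM (𝕜 := ℂ) M‖

section helpers
variable {N : ℕ}

lemma ip_eq_inner (x y : Fin N → ℂ) :
    ip x y = @inner ℂ _ _ ((WithLp.equiv 2 (Fin N → ℂ)).symm y)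
      ((WithLp.equiv 2 (Fin N → ℂ)).symm x) := by
  simp [ip, PiLp.inner_apply, RCLike.inner_apply, mul_comm]

lemma ip_conj (x y : Fin N → ℂ) : ip y x = (starRingEnd ℂ) (ip x y) := by
  simp [ip, map_sum, mul_comm]

lemma ip_mulVec_left (M : Matrix (Fin N) (Fin N) ℂ) (x y : Fin N → ℂ) :
    ip (M.mulVec x) y = ip x (Mᴴ.mulVec y) := by
  simp only [ip, mulVec, dotProduct, conjTranspose_apply, map_sum,
    Finset.sum_mul, Finset.mul_sum, Complex.star_def]
  rw [Finset.sum_comm]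
  exact Finset.sum_congr rfl fun v _ => Finset.sum_congr rfl fun w _ => by
    rw [_root_.map_mul, Complex.conj_conj]; ring

lemma ip_add_left_s13 (x y z : Fin N → ℂ) : ip (x + y) z = ip x z + ip y z := by
  simp [ip, add_mul, Finset.sum_add_distrib]

lemma ip_add_right (x y z : Fin N → ℂ) : ip x (y + z) = ip x y + ip x z := by
  simp [ip, mul_add, Finset.sum_add_distrib]

lemma ip_smul_left (c : ℂ) (x y : Fin N → ℂ) : ip (c • x) y = c * ip x y := by
  simp [ip, Finset.mul_sum, mul_assoc]

lemma ip_neg_right (x y : Fin N → ℂ) : ip x (-y) = -ip x y := by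
  simp [ip, Finset.sum_neg_distrib]

end helpers

section matrices
variable {N : ℕ} (A : Matrix (Fin N) (Fin N) ℝ) (f : Fin N → ℝ)

lemma nablaF_ct (hA : A.IsSymm) : (nablaF A f)ᴴ = -(nablaF A f) := by
  ext n m
  simp only [conjTranspose_apply, nablaF, Matrix.of_apply, neg_apply, Complex.star_def,
    _root_.map_mul, map_sub, Complex.conj_ofReal, hA.apply n m, Matrix.neg_apply, Matrix.of_apply]
  ring

lemma Xf_ct : (Xf f)ᴴ = Xf f := by
  simp [Xf, diagonal_conjTranspose]

lemma Wf_ct (hA : A.IsSymm) : (Wf A f)ᴴ = Wf A f := by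
  simp only [Wf, conjTranspose_sub, conjTranspose_mul, nablaF_ct A f hA, Xf_ct,
    neg_mul, mul_neg]
  abel

lemma comm_identity :
    (-(nablaF A f * nablaF A f)) * Xf f - Xf f * (-(nablaF A f * nablaF A f))
      = Wf A f * nablaF A f + nablaF A f * Wf A f := by
  simp only [Wf]
  noncomm_ring

end matrices

section evolution
variable {N : ℕ}

lemma exp_unitary (Δ : Matrix (Fin N) (Fin N) ℂ) (hΔ : Δᴴ = Δ) (t : ℝ) :
    (NormedSpace.exp ((-(Complex.I * (t : ℂ))) • Δ))ᴴ
      * NormedSpace.exp ((-(Complex.I * (t : ℂ))) • Δ) = 1 := by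
  have h1 : ((-(Complex.I * (t : ℂ))) • Δ)ᴴ = -((-(Complex.I * (t : ℂ))) • Δ) := by
    rw [conjTranspose_smul, hΔ, ← neg_smul]
    congr 1
    simp [Complex.ext_iff]
  rw [← Matrix.exp_conjTranspose, h1]
  have h2 := Matrix.exp_add_of_commute (-((-(Complex.I * (t : ℂ))) • Δ))
    ((-(Complex.I * (t : ℂ))) • Δ) ((Commute.refl _).neg_left)
  rw [neg_add_cancel, NormedSpace.exp_zero] at h2
  exact h2.symm

lemma ip_evol (Δ : Matrix (Fin N) (Fin N) ℂ) (hΔ : Δᴴ = Δ) (t : ℝ) (x y : Fin N → ℂ) :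
    ip (evol Δ x t) (evol Δ y t) = ip x y := by
  rw [evol, evol, ip_mulVec_left, Matrix.mulVec_mulVec, exp_unitary Δ hΔ, Matrix.one_mulVec]

lemma commute_exp {D Δ : Matrix (Fin N) (Fin N) ℂ} (h : Commute D Δ) (c : ℂ) :
    D * NormedSpace.exp (c • Δ) = NormedSpace.exp (c • Δ) * D := by
  letI : NormedRing (Matrix (Fin N) (Fin N) ℂ) := Matrix.linftyOpNormedRing
  letI : NormedAlgebra ℂ (Matrix (Fin N) (Fin N) ℂ) := Matrix.linftyOpNormedAlgebra
  exact ((h.smul_right c).exp_right)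

lemma hasDerivAt_evol (Δ : Matrix (Fin N) (Fin N) ℂ) (g0 : Fin N → ℂ) (t : ℝ) :
    HasDerivAt (fun s : ℝ => evol Δ g0 s)
      (((-Complex.I) • (NormedSpace.exp ((-(Complex.I * (t : ℂ))) • Δ) * Δ)).mulVec g0) t := by
  letI : NormedRing (Matrix (Fin N) (Fin N) ℂ) := Matrix.linftyOpNormedRing
  letI : NormedAlgebra ℂ (Matrix (Fin N) (Fin N) ℂ) := Matrix.linftyOpNormedAlgebra
  have hF : HasDerivAt (fun u : ℂ => NormedSpace.exp (u • Δ))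
      (NormedSpace.exp (((-(Complex.I * (t : ℂ)))) • Δ) * Δ) (-(Complex.I * (t : ℂ))) :=
    hasDerivAt_exp_smul_const Δ _
  have h1 : HasDerivAt (fun s : ℝ => (s : ℂ)) 1 t := by
    exact Complex.ofRealCLM.hasDerivAt (x := t)
  have hc : HasDerivAt (fun s : ℝ => -(Complex.I * (s : ℂ))) (-Complex.I) t := by
    simpa using (h1.const_mul Complex.I).fun_neg
  have hF2 : HasFDerivAt (fun u : ℂ => NormedSpace.exp (u • Δ))
      ((1 : ℂ →L[ℂ] ℂ).smulRight
        (NormedSpace.exp (((-(Complex.I * (t : ℂ)))) • Δ) * Δ)) (-(Complex.I * (t : ℂ))) :=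
    hF.hasFDerivAt
  have hc2 : HasFDerivAt (fun s : ℝ => -(Complex.I * (s : ℂ)))
      ((1 : ℝ →L[ℝ] ℝ).smulRight (-Complex.I)) t := hc.hasFDerivAt
  have hcomp := ((hF2.restrictScalars ℝ).comp t hc2).hasDerivAt
  let L : Matrix (Fin N) (Fin N) ℂ →ₗ[ℂ] (Fin N → ℂ) :=
    { toFun := fun M => M.mulVec g0
      map_add' := fun M₁ M₂ => Matrix.add_mulVec _ _ _
      map_smul' := fun c M => by simp [Matrix.smul_mulVec] }
  have hL := (((LinearMap.toContinuousLinearMap L).restrictScalars ℝ).hasFDerivAt).comp_hasDerivAt t hcomp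
  refine hL.congr_deriv ?_
  simp [evol, L, Function.comp_def, ContinuousLinearMap.coe_restrictScalars', LinearMap.coe_toContinuousLinearMap', ContinuousLinearMap.smulRight_apply]
  rfl

end evolution

section norms
variable {N : ℕ}

lemma norm_ip_le (x y : Fin N → ℂ) : ‖ip x y‖ ≤ l2norm x * l2norm y := by
  rw [ip_eq_inner]
  exact (norm_inner_le_norm _ _).trans_eq (mul_comm _ _)

set_option synthInstance.maxHeartbeats 1000000 in
lemma l2norm_mulVec_le (M : Matrix (Fin N) (Fin N) ℂ) (x : Fin N → ℂ) :
    l2norm (M.mulVec x) ≤ opNorm M * l2norm x := by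
  have h := (Matrix.toEuclideanCLM (𝕜 := ℂ) M).le_opNorm ((WithLp.equiv 2 (Fin N → ℂ)).symm x)
  rw [WithLp.equiv_symm_apply, Matrix.toEuclideanCLM_toLp] at h
  simpa [l2norm, opNorm, Matrix.toLin'_apply] using h

lemma l2norm_eq_one {x : Fin N → ℂ} (h : ip x x = 1) : l2norm x = 1 := by
  have h2 : (1:ℂ) = ((l2norm x : ℂ)) ^ 2 := by
    rw [← h, ip_eq_inner]
    exact inner_self_eq_norm_sq_to_K (𝕜 := ℂ) _
  have h3 : (l2norm x) ^ 2 = 1 := by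
    exact_mod_cast h2.symm
  have h4 : (0:ℝ) ≤ l2norm x := norm_nonneg _
  nlinarith

lemma hasDerivAt_ip_re {u v : ℝ → (Fin N → ℂ)} {u' v' : Fin N → ℂ} {t : ℝ}
    (hu : HasDerivAt u u' t) (hv : HasDerivAt v v' t) :
    HasDerivAt (fun s => (ip (u s) (v s)).re)
      ((ip u' (v t)).re + (ip (u t) v').re) t := by
  have hu_k : ∀ k, HasDerivAt (fun s => u s k) (u' k) t := fun k =>
    ((ContinuousLinearMap.proj (R := ℝ) (φ := fun _ : Fin N => ℂ) k).hasFDerivAt).comp_hasDerivAt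
      t hu
  have hv_k : ∀ k, HasDerivAt (fun s => v s k) (v' k) t := fun k =>
    ((ContinuousLinearMap.proj (R := ℝ) (φ := fun _ : Fin N => ℂ) k).hasFDerivAt).comp_hasDerivAt
      t hv
  have hconj_k : ∀ k, HasDerivAt (fun s => (starRingEnd ℂ) (v s k)) ((starRingEnd ℂ) (v' k)) t :=
    fun k =>
    ((Complex.conjCLE.toContinuousLinearMap).hasFDerivAt).comp_hasDerivAt t (hv_k k)
  have hterm : ∀ k, HasDerivAt (fun s => (u s k * (starRingEnd ℂ) (v s k)).re)
      ((u' k * (starRingEnd ℂ) (v t k) + u t k * (starRingEnd ℂ) (v' k)).re) t := fun k =>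
    (Complex.reCLM.hasFDerivAt).comp_hasDerivAt t ((hu_k k).mul (hconj_k k))
  have H := HasDerivAt.fun_sum (u := Finset.univ)
    (A := fun k s => (u s k * (starRingEnd ℂ) (v s k)).re)
    (A' := fun k => (u' k * (starRingEnd ℂ) (v t k) + u t k * (starRingEnd ℂ) (v' k)).re)
    (fun k _ => hterm k)
  have heq : (fun s : ℝ => (ip (u s) (v s)).re)
      = fun s => ∑ k, (u s k * (starRingEnd ℂ) (v s k)).re := by
    funext s
    simp [ip, Complex.re_sum]
  rw [heq]
  refine H.congr_deriv ?_
  simp [ip, Complex.re_sum, Complex.add_re, Finset.sum_add_distrib]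

end norms

/-- Expected feature location dynamics for `ε`-`f` regular signals:
if `W_f g^(t) = g^(t) + e_t` with `‖e_t‖ ≤ ε`, then
`|d/dt ⟨X_f g^(t), g^(t)⟩ - 2 ⟨i ∇_f g^(0), g^(0)⟩| ≤ 2 ε ‖∇_f‖_op`. -/
theorem deviation_bound_single_feature (N : ℕ) (A : Matrix (Fin N) (Fin N) ℝ)
    (hA : A.IsSymm) (f : Fin N → ℝ) (g0 : Fin N → ℂ) (hg0 : ip g0 g0 = 1)
    (t : ℝ) (ε : ℝ) (e : Fin N → ℂ)
    (hreg : (Wf A f).mulVec (evol (-(nablaF A f * nablaF A f)) g0 t)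
        = evol (-(nablaF A f * nablaF A f)) g0 t + e)
    (he : l2norm e ≤ ε) :
    |deriv (fun s : ℝ =>
        (ip ((Xf f).mulVec (evol (-(nablaF A f * nablaF A f)) g0 s))
          (evol (-(nablaF A f * nablaF A f)) g0 s)).re) t
      - 2 * (ip ((Complex.I • nablaF A f).mulVec g0) g0).re|
      ≤ 2 * ε * opNorm (nablaF A f) := by
  classical
  -- notation
  let D := nablaF A f
  let Δm := -(D * D)
  let X := Xf f
  let W := Wf A f
  let U := NormedSpace.exp ((-(Complex.I * (t : ℂ))) • Δm)
  let G := evol Δm g0 t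
  have hΔct : Δmᴴ = Δm := by
    simp only [Δm, D, conjTranspose_neg, conjTranspose_mul, nablaF_ct A f hA, neg_mul, mul_neg,
      neg_neg]
  have hDΔ : Commute D Δm := (((Commute.refl D).mul_right (Commute.refl D))).neg_right
  -- derivative of the evolution
  have hg' : HasDerivAt (fun s : ℝ => evol Δm g0 s)
      (((-Complex.I) • (U * Δm)).mulVec g0) t := hasDerivAt_evol Δm g0 t
  -- rewrite the derivative as B *ᵥ G with B := (-I) • Δm
  have hg'2 : ((-Complex.I) • (U * Δm)).mulVec g0 = ((-Complex.I) • Δm).mulVec G := by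
    have hUΔ : Δm * U = U * Δm := commute_exp (Commute.refl Δm) _
    show _ = ((-Complex.I) • Δm).mulVec (U.mulVec g0)
    rw [Matrix.mulVec_mulVec, Matrix.smul_mul, hUΔ]
  rw [hg'2] at hg'
  -- derivative of s ↦ X *ᵥ g s
  have hu : HasDerivAt (fun s : ℝ => X.mulVec (evol Δm g0 s))
      (X.mulVec (((-Complex.I) • Δm).mulVec G)) t := by
    have h := (((LinearMap.toContinuousLinearMap
        (Matrix.mulVecLin X)).restrictScalars ℝ).hasFDerivAt).comp_hasDerivAt t hg'
    simpa [Function.comp_def] using h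
  have hE := (hasDerivAt_ip_re hu hg').deriv
  have hE' : deriv (fun s : ℝ =>
        (ip ((Xf f).mulVec (evol (-(nablaF A f * nablaF A f)) g0 s))
          (evol (-(nablaF A f * nablaF A f)) g0 s)).re) t
      = (ip (X.mulVec (((-Complex.I) • Δm).mulVec G)) G).re
        + (ip (X.mulVec G) (((-Complex.I) • Δm).mulVec G)).re := hE
  -- adjoint manipulations
  have hterm1 : ip (X.mulVec (((-Complex.I) • Δm).mulVec G)) G
      = ip ((X * ((-Complex.I) • Δm)).mulVec G) G := by rw [Matrix.mulVec_mulVec]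
  have hBct : ((-Complex.I) • Δm)ᴴ = Complex.I • Δm := by
    rw [conjTranspose_smul, hΔct]
    congr 1
    simp
  have hterm2 : ip (X.mulVec G) ((((-Complex.I) • Δm)).mulVec G)
      = ip (((Complex.I • Δm) * X).mulVec G) G := by
    have h2 := ip_mulVec_left (((-Complex.I) • Δm)ᴴ) (X.mulVec G) G
    rw [conjTranspose_conjTranspose] at h2
    rw [← h2, hBct, Matrix.mulVec_mulVec]
  have hM0 : X * ((-Complex.I) • Δm) + (Complex.I • Δm) * X
      = Complex.I • (W * D + D * W) := by
    have hcomm := comm_identity A f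
    calc X * ((-Complex.I) • Δm) + (Complex.I • Δm) * X
        = Complex.I • (Δm * X - X * Δm) := by
          rw [mul_smul_comm, smul_mul_assoc, smul_sub, neg_smul]; abel
      _ = Complex.I • (W * D + D * W) := by
          rw [show Δm * X - X * Δm = W * D + D * W from hcomm]
  have hsum : ip (X.mulVec (((-Complex.I) • Δm).mulVec G)) G
      + ip (X.mulVec G) ((((-Complex.I) • Δm)).mulVec G)
      = Complex.I * (ip ((W * D).mulVec G) G + ip ((D * W).mulVec G) G) := by
    rw [hterm1, hterm2, ← ip_add_left_s13]
    rw [← Matrix.add_mulVec, hM0, Matrix.smul_mulVec, ip_smul_left,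
      Matrix.add_mulVec, ip_add_left_s13]
  -- the two pieces via the regularity hypothesis
  have hWG : W.mulVec G = G + e := hreg
  have hz1 : ip ((W * D).mulVec G) G = ip (D.mulVec G) G + ip (D.mulVec G) e := by
    rw [← Matrix.mulVec_mulVec, ip_mulVec_left, show Wᴴ = W from Wf_ct A f hA, hWG,
      ip_add_right]
  have hz2 : ip ((D * W).mulVec G) G
      = -((starRingEnd ℂ) (ip (D.mulVec G) G) + (starRingEnd ℂ) (ip (D.mulVec G) e)) := by
    rw [← Matrix.mulVec_mulVec, ip_mulVec_left, show Dᴴ = -D from nablaF_ct A f hA,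
      Matrix.neg_mulVec, ip_neg_right, hWG, ip_add_left_s13, ← ip_conj, ← ip_conj]
  -- conservation of momentum
  have hcons : ip (D.mulVec G) G = ip (D.mulVec g0) g0 := by
    have h1 : D.mulVec G = evol Δm (D.mulVec g0) t := by
      show D.mulVec (U.mulVec g0) = U.mulVec (D.mulVec g0)
      rw [Matrix.mulVec_mulVec, Matrix.mulVec_mulVec, commute_exp hDΔ _]
    rw [h1]
    exact ip_evol Δm hΔct t _ g0
  -- unit norm of G
  have hGnorm : l2norm G = 1 := l2norm_eq_one ((ip_evol Δm hΔct t g0 g0).trans hg0)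
  -- the real-part computation
  have hsum2 : (ip (X.mulVec (((-Complex.I) • Δm).mulVec G)) G).re
      + (ip (X.mulVec G) (((-Complex.I) • Δm).mulVec G)).re
      = -2 * (ip (D.mulVec G) G).im - 2 * (ip (D.mulVec G) e).im := by
    rw [← Complex.add_re, hsum, hz1, hz2, Complex.I_mul_re]
    simp [Complex.add_im, Complex.sub_im, Complex.neg_im, Complex.conj_im]
    ring
  have htarget : (ip ((Complex.I • nablaF A f).mulVec g0) g0).re
      = -(ip (D.mulVec g0) g0).im := by
    rw [Matrix.smul_mulVec, ip_smul_left, Complex.I_mul_re]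
  have him := congrArg Complex.im hcons
  have hdiff : deriv (fun s : ℝ =>
        (ip ((Xf f).mulVec (evol (-(nablaF A f * nablaF A f)) g0 s))
          (evol (-(nablaF A f * nablaF A f)) g0 s)).re) t
      - 2 * (ip ((Complex.I • nablaF A f).mulVec g0) g0).re
      = -2 * (ip (D.mulVec G) e).im := by
    rw [hE', hsum2, htarget, ← him]
    ring
  rw [hdiff]
  -- final Cauchy–Schwarz estimate
  have hεnn : (0:ℝ) ≤ ε := le_trans (norm_nonneg _) he
  have hw2 : ‖ip (D.mulVec G) e‖ ≤ opNorm D * ε := by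
    calc ‖ip (D.mulVec G) e‖ ≤ l2norm (D.mulVec G) * l2norm e := norm_ip_le _ _
      _ ≤ (opNorm D * l2norm G) * ε := by
          exact mul_le_mul (l2norm_mulVec_le D G) he (norm_nonneg _)
            (mul_nonneg (norm_nonneg _) (norm_nonneg _))
      _ = opNorm D * ε := by rw [hGnorm, mul_one]
  have him2 : |(ip (D.mulVec G) e).im| ≤ ‖ip (D.mulVec G) e‖ :=
    Complex.abs_im_le_norm _
  have : |(-2 : ℝ) * (ip (D.mulVec G) e).im| = 2 * |(ip (D.mulVec G) e).im| := by
    rw [abs_mul]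
    norm_num
  rw [this]
  have : (2:ℝ) * ε * opNorm (nablaF A f) = 2 * (opNorm D * ε) := by ring
  rw [this]
  have := him2.trans hw2
  linarith
end
end
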